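/- arXiv:2311.03109 — 2 statements merged into one kernel-verified Lean document; each statement's English description precedes it below -/
import Mathlib

section
/- In the Ritz augmentation step, with A *_M ℙ_m = ℚ_m ×_{N+1} B_m^T, A^T *_N ℚ_m = ℙ_m ×_{M+1} B_m + β_m P_{m+1} ∘ e_m, approximate left singular tensors Ũ_i = ℚ_m ×_{N+1} u_i^T where (s_i, u_i, v_i) are singular triplets of B_m, and P_{m+1} of unit norm orthogonal to the slices of ℙ_m, the orthogonalization coefficients satisfy ρ_i = ⟨Ũ_i, A *_M P_{m+1}⟩ = β_m u_i(m). -/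
/-!
Moving `A` to the other side of the inner product, `ρ = ⟨(Aᵀ ℚ) u, P_{m+1}⟩`. By the second
Lanczos relation `(Aᵀ ℚ) u = ℙ (Bᵀ u) + β u(m) P_{m+1}`; the first term is orthogonal to
`P_{m+1}` and the second contributes `β u(m) ‖P_{m+1}‖² = β u(m)`.
-/

/-- Slice-wise application of `A` to a tensor with an extra last mode (`A *_M ℙ_m`). -/
def eprodSlices {ι κ : Type*} {m : ℕ} [Fintype κ] (A : ι → κ → ℝ) (P : κ → Fin m → ℝ) :
    ι → Fin m → ℝ := fun i j => ∑ k, A i k * P k j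

/-- The `(M+1)`-mode product of `ℙ` with a matrix `B`. -/
def modeLast {κ : Type*} {m : ℕ} (P : κ → Fin m → ℝ) (B : Matrix (Fin m) (Fin m) ℝ) :
    κ → Fin m → ℝ := fun x i => ∑ k, P x k * B i k

/-- Contraction of the last mode against a vector (`X ×_{N+1} u^T`). -/
def modeVec {κ : Type*} {m : ℕ} (X : κ → Fin m → ℝ) (u : Fin m → ℝ) : κ → ℝ :=
  fun x => ∑ k, u k * X x k

/-- The transpose of a tensor. -/
def ttrans {ι κ : Type*} (A : ι → κ → ℝ) : κ → ι → ℝ := fun k i => A i k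

/-- Application of `A ∈ ℝ^{I×J}` to a tensor `V ∈ ℝ^{J}` (`A *_M V`). -/
def applyT {ι κ : Type*} [Fintype κ] (A : ι → κ → ℝ) (V : κ → ℝ) : ι → ℝ :=
  fun i => ∑ k, A i k * V k

/-- The outer product `R ∘ e`. -/
def outerLast {κ : Type*} {m : ℕ} (R : κ → ℝ) (e : Fin m → ℝ) : κ → Fin m → ℝ :=
  fun x j => R x * e j

/-- The Frobenius inner product. -/
def tinner {κ : Type*} [Fintype κ] (X Y : κ → ℝ) : ℝ := ∑ x, X x * Y x

open Matrix

section MatrixForm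

variable {ι κ : Type*}

theorem tinner_eq_dotProduct [Fintype κ] (X Y : κ → ℝ) : tinner X Y = X ⬝ᵥ Y := rfl

theorem applyT_eq_mulVec [Fintype κ] (A : ι → κ → ℝ) (V : κ → ℝ) :
    applyT A V = of A *ᵥ V := rfl

theorem modeVec_eq_mulVec {m : ℕ} (X : κ → Fin m → ℝ) (u : Fin m → ℝ) :
    modeVec X u = of X *ᵥ u := by
  ext x
  simp only [modeVec, mulVec, dotProduct, of_apply, mul_comm]

theorem eprodSlices_ttrans_eq_transpose_mul [Fintype ι] {m : ℕ} (A : ι → κ → ℝ)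
    (Q : ι → Fin m → ℝ) : eprodSlices (ttrans A) Q = (of A)ᵀ * of Q := rfl

theorem modeLast_eq_mul_transpose {m : ℕ} (P : κ → Fin m → ℝ)
    (B : Matrix (Fin m) (Fin m) ℝ) : modeLast P B = of P * Bᵀ := rfl

theorem outerLast_eq_vecMulVec {m : ℕ} (R : κ → ℝ) (e : Fin m → ℝ) :
    outerLast R e = vecMulVec R e := rfl

end MatrixForm

theorem dotProduct_mulVec_eq_of_transpose_mul_eq_add_vecMulVec {R ι κ n : Type*} [CommRing R]
    [Fintype ι] [Fintype κ] [Fintype n] {A : Matrix ι κ R} {Q : Matrix ι n R}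
    {P : Matrix κ n R} {C : Matrix n n R} {p : κ → R} {e : n → R} {β : R}
    (h : Aᵀ * Q = P * C + vecMulVec (β • p) e) (horth : Pᵀ *ᵥ p = 0) (hnorm : p ⬝ᵥ p = 1)
    (u : n → R) : (Q *ᵥ u) ⬝ᵥ (A *ᵥ p) = β * (e ⬝ᵥ u) :=
  calc (Q *ᵥ u) ⬝ᵥ (A *ᵥ p) = ((Aᵀ * Q) *ᵥ u) ⬝ᵥ p := by
        rw [dotProduct_mulVec, ← mulVec_transpose, ← mulVec_mulVec]
    _ = (C *ᵥ u) ⬝ᵥ (Pᵀ *ᵥ p) + β * (e ⬝ᵥ u) * (p ⬝ᵥ p) := by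
        rw [h, add_mulVec, add_dotProduct, ← mulVec_mulVec, dotProduct_comm (P *ᵥ _),
          dotProduct_mulVec, mulVec_transpose, vecMulVec_mulVec, smul_dotProduct,
          op_smul_eq_mul, smul_dotProduct, smul_eq_mul, dotProduct_comm (p ᵥ* P)]
        ring
    _ = β * (e ⬝ᵥ u) := by rw [horth, hnorm, dotProduct_zero, zero_add, mul_one]

theorem ritz_orthogonalization_coefficient_general {ι κ : Type*} [Fintype ι] [Fintype κ] {m : ℕ}
    (A : ι → κ → ℝ) (P : κ → Fin (m + 1) → ℝ) (Q : ι → Fin (m + 1) → ℝ)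
    (B : Matrix (Fin (m + 1)) (Fin (m + 1)) ℝ) (β : ℝ) (Pnew : κ → ℝ)
    (hPnew_norm : tinner Pnew Pnew = 1)
    (hPnew_orth : ∀ j, tinner (fun x => P x j) Pnew = 0)
    (h₂ : eprodSlices (ttrans A) Q =
      modeLast P B + outerLast (β • Pnew) (Pi.single (Fin.last m) 1))
    (u : Fin (m + 1) → ℝ) :
    tinner (modeVec Q u) (applyT A Pnew) = β * u (Fin.last m) := by
  rw [eprodSlices_ttrans_eq_transpose_mul, modeLast_eq_mul_transpose,
    outerLast_eq_vecMulVec] at h₂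
  rw [tinner_eq_dotProduct, modeVec_eq_mulVec, applyT_eq_mulVec,
    dotProduct_mulVec_eq_of_transpose_mul_eq_add_vecMulVec h₂ (funext hPnew_orth) hPnew_norm u,
    single_one_dotProduct]

/-- In the Ritz augmentation step, with the Lanczos relations
`A *_M ℙ_m = ℚ_m ×_{N+1} B_m^T`,
`A^T *_N ℚ_m = ℙ_m ×_{M+1} B_m + β_m P_{m+1} ∘ e_m`, `(s_i, u_i, v_i)` a singular
triplet of `B_m`, `Ũ_i = ℚ_m ×_{N+1} u_i^T`, and `P_{m+1}` of unit norm orthogonal to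
the slices of `ℙ_m`, the orthogonalization coefficients satisfy
`ρ_i = ⟨Ũ_i, A *_M P_{m+1}⟩ = β_m u_i(m)`. -/
theorem ritz_orthogonalization_coefficient {ι κ : Type*} [Fintype ι] [Fintype κ] {m : ℕ}
    (A : ι → κ → ℝ) (P : κ → Fin (m + 1) → ℝ) (Q : ι → Fin (m + 1) → ℝ)
    (B : Matrix (Fin (m + 1)) (Fin (m + 1)) ℝ) (β : ℝ) (Pnew : κ → ℝ)
    (hP : ∀ i j, tinner (fun x => P x i) (fun x => P x j) = if i = j then 1 else 0)
    (hQ : ∀ i j, tinner (fun x => Q x i) (fun x => Q x j) = if i = j then 1 else 0)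
    (hPnew_norm : tinner Pnew Pnew = 1)
    (hPnew_orth : ∀ j, tinner (fun x => P x j) Pnew = 0)
    (h₁ : eprodSlices A P = modeLast Q B.transpose)
    (h₂ : eprodSlices (ttrans A) Q =
      modeLast P B + outerLast (β • Pnew) (Pi.single (Fin.last m) 1))
    (s : ℝ) (u v : Fin (m + 1) → ℝ)
    (hv : B.mulVec v = s • u) (hu : B.transpose.mulVec u = s • v) :
    tinner (modeVec Q u) (applyT A Pnew) = β * u (Fin.last m) :=
  ritz_orthogonalization_coefficient_general A P Q B β Pnew hPnew_norm hPnew_orth h₂ u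
end

section
/- With the Ritz augmentation notation, each approximate right singular tensor Ṽ_i = ℙ_m ×_{M+1} v_i^T is a Ritz tensor of A^T *_N A: it satisfies A^T *_N A *_M Ṽ_i = s_i^2 Ṽ_i + s_i (R_m ∘ e_m) ×_{M+1} u_i^T. -/
section ModeProducts

variable {ι κ : Type*} {m : ℕ}

lemma modeVec_smul (X : κ → Fin m → ℝ) (c : ℝ) (w : Fin m → ℝ) :
    modeVec X (c • w) = c • modeVec X w := by
  funext x
  simp only [modeVec, Pi.smul_apply, smul_eq_mul, Finset.mul_sum, mul_assoc]

lemma modeVec_add (X Y : κ → Fin m → ℝ) (w : Fin m → ℝ) :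
    modeVec (X + Y) w = modeVec X w + modeVec Y w := by
  funext x
  simp only [modeVec, Pi.add_apply, mul_add, Finset.sum_add_distrib]

lemma modeVec_modeLast (P : κ → Fin m → ℝ) (B : Matrix (Fin m) (Fin m) ℝ) (w : Fin m → ℝ) :
    modeVec (modeLast P B) w = modeVec P (B.transpose.mulVec w) := by
  funext x
  simp only [modeVec, modeLast, Matrix.mulVec, dotProduct, Matrix.transpose_apply,
    Finset.mul_sum, Finset.sum_mul]
  rw [Finset.sum_comm]
  exact Finset.sum_congr rfl fun _ _ => Finset.sum_congr rfl fun _ _ => by ring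

lemma applyT_smul [Fintype κ] (A : ι → κ → ℝ) (c : ℝ) (V : κ → ℝ) :
    applyT A (c • V) = c • applyT A V := by
  funext i
  simp only [applyT, Pi.smul_apply, smul_eq_mul, Finset.mul_sum, mul_left_comm]

lemma applyT_modeVec [Fintype κ] (A : ι → κ → ℝ) (X : κ → Fin m → ℝ) (w : Fin m → ℝ) :
    applyT A (modeVec X w) = modeVec (eprodSlices A X) w := by
  funext i
  simp only [applyT, modeVec, eprodSlices, Finset.mul_sum]
  rw [Finset.sum_comm]
  simp only [mul_left_comm]

end ModeProducts

/-- With the Lanczos relations `A *_M ℙ_m = ℚ_m ×_{N+1} B_m^T` and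
`A^T *_N ℚ_m = ℙ_m ×_{M+1} B_m + R_m ∘ e_m`, and `(s_i, u_i, v_i)` a singular triplet
of `B_m`, the approximate right singular tensor `Ṽ_i = ℙ_m ×_{M+1} v_i^T` is a Ritz
tensor of `A^T *_N A`:
`A^T *_N A *_M Ṽ_i = s_i² Ṽ_i + s_i (R_m ∘ e_m) ×_{M+1} u_i^T`. -/
theorem ritz_tensor_relation {ι κ : Type*} [Fintype ι] [Fintype κ] {m : ℕ}
    (A : ι → κ → ℝ) (P : κ → Fin (m + 1) → ℝ) (Q : ι → Fin (m + 1) → ℝ)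
    (B : Matrix (Fin (m + 1)) (Fin (m + 1)) ℝ) (R : κ → ℝ)
    (h₁ : eprodSlices A P = modeLast Q B.transpose)
    (h₂ : eprodSlices (ttrans A) Q =
      modeLast P B + outerLast R (Pi.single (Fin.last m) 1))
    (s : ℝ) (u v : Fin (m + 1) → ℝ)
    (hv : B.mulVec v = s • u) (hu : B.transpose.mulVec u = s • v) :
    applyT (ttrans A) (applyT A (modeVec P v)) =
      s ^ 2 • modeVec P v + s • modeVec (outerLast R (Pi.single (Fin.last m) 1)) u := by
  calc applyT (ttrans A) (applyT A (modeVec P v))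
      = applyT (ttrans A) (s • modeVec Q u) := by
        rw [applyT_modeVec, h₁, modeVec_modeLast, Matrix.transpose_transpose, hv, modeVec_smul]
    _ = s • (modeVec (modeLast P B) u + modeVec (outerLast R (Pi.single (Fin.last m) 1)) u) := by
        rw [applyT_smul, applyT_modeVec, h₂, modeVec_add]
    _ = s ^ 2 • modeVec P v + s • modeVec (outerLast R (Pi.single (Fin.last m) 1)) u := by
        rw [modeVec_modeLast, hu, modeVec_smul, smul_add, smul_smul, sq]
end
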